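/- arXiv:2210.13953 — 10 statements merged into one kernel-verified Lean document; each statement's English description precedes it below -/
import Mathlib

section
/- First Reduction Case: if every non-logical symbol of φ occurs in Γ (i.e. L_φ ⊆ L_Γ), then Γ is friendly to φ if and only if Γ ⊢ φ. -/
open FirstOrder Language

universe u v

/-- `Friendly ι Γ φ` : the theory `Γ` (in its own language `L₀ = L_Γ`, included in the
language `L = L_{Γ,φ}` via `ι`) is *friendly* to the sentence `φ` of `L`:
every model of `Γ` has an elementary extension which can be expanded to a model of `φ`. -/
def Friendly {L₀ L : FirstOrder.Language.{u, v}} (ι : L₀ →ᴸ L) (Γ : L₀.Theory)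
    (φ : L.Sentence) : Prop :=
  ∀ (M : Type (max u v)) [L₀.Structure M] [Nonempty M],
    M ⊨ Γ →
    ∃ (N : Type (max u v)) (S₀ : L₀.Structure N) (SL : L.Structure N),
      Nonempty (@ElementaryEmbedding L₀ M N _ S₀) ∧
      (@LHom.IsExpansionOn L₀ L ι N S₀ SL) ∧
      (@Sentence.Realize L N SL φ)

/-- First Reduction Case: if all symbols of `φ` occur in `Γ` (i.e. `φ` is a sentence of
`L_Γ`, included into `L` via `ι`), then `Γ` is friendly to `φ` iff `Γ ⊢ φ`. -/
theorem first_reduction_case {L₀ L : FirstOrder.Language.{u, v}} (ι : L₀ →ᴸ L)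
    (hι : ι.Injective) (Γ : L₀.Theory) (φ : L₀.Sentence) :
    Friendly ι Γ (ι.onSentence φ) ↔ Γ ⊨ᵇ φ := by
  classical
  constructor
  · intro hF
    rw [Theory.models_sentence_iff]
    intro M
    obtain ⟨N, S₀, SL, ⟨e⟩, hexp, hφ⟩ := hF M ((Theory.model_iff Γ).2 M.is_model.realize_of_mem)
    haveI := hexp
    have hN : @Sentence.Realize L₀ N S₀ φ := @LHom.realize_onSentence L₀ L N _ SL ι hexp φ |>.1 hφ
    exact (e.map_sentence φ).2 hN
  · intro h M _ _ hM
    haveI : Inhabited M := Classical.inhabited_of_nonempty ‹_›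
    letI SL := ι.defaultExpansion M
    haveI := hι.isExpansionOn_default M
    haveI : M ⊨ Γ := hM
    exact ⟨M, ‹_›, SL, ⟨ElementaryEmbedding.refl L₀ M⟩, hι.isExpansionOn_default M,
      (ι.realize_onSentence M φ).2 (h.realize_sentence M)⟩
end

section
/- Second Reduction Case: if Γ is a consistent and complete first-order theory in its language L_Γ, then for any sentence φ, Γ is friendly to φ if and only if Γ ⊬ ¬φ. -/
open FirstOrder Language

universe u v

/-- Transfer lemma: if `M` and `N` are models of a complete theory `Γ`, then any finite
set of sentences from the elementary diagram of `M` can be realized in `N` for a suitable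
interpretation of the new constants. -/
lemma transfer_diagram {L₀ : FirstOrder.Language.{u, v}} {Γ : L₀.Theory} (hcomp : Γ.IsComplete)
    (M N : Type (max u v)) [L₀.Structure M] [L₀.Structure N] [Nonempty M] [Nonempty N]
    (hM : M ⊨ Γ) (hN : N ⊨ Γ) (S : Finset (L₀[[M]].Sentence))
    (hS : ∀ σ ∈ S, σ ∈ L₀.elementaryDiagram M) :
    ∃ c : M ⊕ Empty → N, ∀ σ ∈ S,
      (BoundedFormula.constantsVarsEquiv σ : L₀.BoundedFormula (M ⊕ Empty) 0).Realize c
        (default : Fin 0 → N) := by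
  classical
  haveI := hM; haveI := hN
  set χ : L₀.BoundedFormula (M ⊕ Empty) 0 :=
    BoundedFormula.iInf (fun σ : S => BoundedFormula.constantsVarsEquiv σ.1) with hχdef
  have hsub : ↑χ.freeVarFinset ⊆ (↑χ.freeVarFinset : Set (M ⊕ Empty)) := subset_rfl
  set χ' : L₀.BoundedFormula (↑χ.freeVarFinset : Set (M ⊕ Empty)) 0 :=
    χ.restrictFreeVar (Set.inclusion hsub) with hχ'def
  set ψ : L₀.Sentence :=
    Formula.iExs (↑χ.freeVarFinset : Set (M ⊕ Empty)) (Formula.relabel (Sum.inr : (↑χ.freeVarFinset : Set (M ⊕ Empty)) →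
      Empty ⊕ (↑χ.freeVarFinset : Set (M ⊕ Empty))) χ') with hψdef
  have key : ∀ (K : Type (max u v)) [L₀.Structure K] [Nonempty K],
      K ⊨ ψ ↔ ∃ c : M ⊕ Empty → K, χ.Realize c (default : Fin 0 → K) := by
    intro K _ _
    rw [Sentence.Realize, hψdef, Formula.realize_iExs]
    simp only [Formula.realize_relabel, Sum.elim_comp_inr]
    constructor
    · rintro ⟨i, hi⟩
      refine ⟨fun x => if h : x ∈ χ.freeVarFinset then i ⟨x, h⟩ else Classical.arbitrary K, ?_⟩
      rw [← BoundedFormula.realize_restrictFreeVar' hsub]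
      have hiv : ((fun x => if h : x ∈ χ.freeVarFinset then i ⟨x, h⟩ else Classical.arbitrary K) ∘
          ((↑) : (↑χ.freeVarFinset : Set (M ⊕ Empty)) → M ⊕ Empty)) = i := by
        funext a
        exact dif_pos (Finset.mem_coe.1 a.2)
      rw [hiv]
      exact hi
    · rintro ⟨c, hc⟩
      exact ⟨c ∘ ((↑) : (↑χ.freeVarFinset : Set (M ⊕ Empty)) → M ⊕ Empty),
        (BoundedFormula.realize_restrictFreeVar' hsub).2 hc⟩
  have hMψ : M ⊨ ψ := by
    refine (key M).2 ⟨Sum.elim (fun a => ↑(L₀.con a)) (default : Empty → M), ?_⟩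
    rw [hχdef, BoundedFormula.realize_iInf]
    rintro ⟨σ, hσ⟩
    rw [BoundedFormula.realize_constantsVarsEquiv]
    exact mem_completeTheory.1 (hS σ hσ)
  have hNψ : N ⊨ ψ := by
    rw [hcomp.realize_sentence_iff ψ N]
    rw [← hcomp.realize_sentence_iff ψ M]
    exact hMψ
  obtain ⟨c, hc⟩ := (key N).1 hNψ
  rw [hχdef, BoundedFormula.realize_iInf] at hc
  exact ⟨c, fun σ hσ => hc ⟨σ, hσ⟩⟩

/-- Second Reduction Case: if `Γ` is a consistent complete theory in its language `L_Γ`,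
then `Γ` is friendly to `φ` iff `Γ ⊬ ¬φ`. -/
theorem second_reduction_case {L₀ L : FirstOrder.Language.{u, v}} (ι : L₀ →ᴸ L)
    (hι : ι.Injective) (Γ : L₀.Theory) (hsat : Γ.IsSatisfiable) (hcomp : Γ.IsComplete)
    (φ : L.Sentence) :
    Friendly ι Γ φ ↔ ¬ (ι.onTheory Γ ⊨ᵇ φ.not) := by
  constructor
  · -- easy direction
    intro hfr hmods
    obtain ⟨M⟩ := hsat
    obtain ⟨N, S₀, SL, ⟨e⟩, hexp, hφ⟩ := hfr M M.is_model
    letI := S₀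
    letI := SL
    haveI : Nonempty N := ⟨e (Classical.arbitrary M)⟩
    have hNΓ : N ⊨ Γ := e.elementarilyEquivalent.theory_model_iff.1 M.is_model
    haveI := hexp
    haveI : N ⊨ ι.onTheory Γ := (LHom.onTheory_model ι Γ).2 hNΓ
    have hnot : N ⊨ φ.not := hmods.realize_sentence N
    exact (Sentence.realize_not N).1 hnot hφ
  · -- hard direction
    intro hns
    classical
    rw [Theory.models_iff_not_satisfiable, not_not] at hns
    intro M _ _ hMΓ
    obtain ⟨N₀⟩ := hns
    letI instR : L₀.Structure N₀ := ι.reduct N₀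
    have hN₀Γ : (N₀ : Type (max u v)) ⊨ Γ :=
      (LHom.onTheory_model ι Γ).1 (N₀.is_model.mono Set.subset_union_left)
    have hN₀φ : (N₀ : Type (max u v)) ⊨ φ := by
      have h1 : (N₀ : Type (max u v)) ⊨ φ.not.not :=
        Theory.realize_sentence_of_mem (T := ι.onTheory Γ ∪ {φ.not.not})
          (Set.mem_union_right _ rfl)
      simpa [Sentence.Realize] using h1
    set ι' : L₀[[M]] →ᴸ L[[M]] := LHom.addConstants M ι with hι'
    set φ' : L[[M]].Sentence := (L.lhomWithConstants M).onSentence φ with hφ'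
    set D : L₀[[M]].Theory := L₀.elementaryDiagram M with hD
    have hbig : (ι'.onTheory D ∪ {φ'}).IsSatisfiable := by
      have heq : ι'.onTheory D ∪ {φ'} =
          ⋃ (i : Finset D), (ι'.onTheory (Subtype.val '' (↑i : Set D)) ∪ {φ'}) := by
        ext χ
        simp only [Set.mem_iUnion, Set.mem_union, Set.mem_singleton_iff, LHom.mem_onTheory]
        constructor
        · rintro (⟨σ, hσ, rfl⟩ | rfl)
          · exact ⟨{⟨σ, hσ⟩}, Or.inl ⟨σ, ⟨⟨σ, hσ⟩, by simp, rfl⟩, rfl⟩⟩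
          · exact ⟨∅, Or.inr rfl⟩
        · rintro ⟨i, ⟨σ, ⟨⟨σ', hσ'⟩, _, rfl⟩, rfl⟩ | rfl⟩
          · exact Or.inl ⟨σ', hσ', rfl⟩
          · exact Or.inr rfl
      rw [heq, Theory.isSatisfiable_directed_union_iff]
      · intro i
        obtain ⟨c, hc⟩ := transfer_diagram hcomp M N₀ hMΓ hN₀Γ (i.image Subtype.val)
          (by
            intro σ hσ
            simp only [Finset.mem_image] at hσ
            obtain ⟨⟨σ', hσ'⟩, _, rfl⟩ := hσ
            exact hσ')
        letI cS : (constantsOn M).Structure N₀ := constantsOn.structure (c ∘ Sum.inl)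
        have hceq : c = Sum.elim (fun a => (((L₀.con a : L₀[[M]].Constants)) : N₀))
            (default : Empty → N₀) := by
          funext x
          cases x with
          | inl a => rfl
          | inr e => exact e.elim
        have hmod : (N₀ : Type (max u v)) ⊨ ι'.onTheory (Subtype.val '' (↑i : Set D)) ∪ {φ'} := by
          refine ⟨fun χ hχ => ?_⟩
          rcases hχ with hχ | hχ
          · obtain ⟨σ, hσ, rfl⟩ := hχ
            rw [LHom.realize_onSentence]
            have hc' := hc σ (by
              obtain ⟨⟨σ', hσ'⟩, hmem, rfl⟩ := hσ
              exact Finset.mem_image.2 ⟨⟨σ', hσ'⟩, hmem, rfl⟩)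
            rw [hceq] at hc'
            exact (BoundedFormula.realize_constantsVarsEquiv).1 hc'
          · rw [Set.mem_singleton_iff.1 hχ]
            rw [LHom.realize_onSentence]
            exact hN₀φ
        haveI := hmod
        exact Theory.Model.isSatisfiable N₀
      · apply Monotone.directed_le
        intro i j hij
        exact Set.union_subset_union_left _
          (Set.image_mono (Set.image_mono (Finset.coe_subset.2 hij)))
    obtain ⟨K⟩ := hbig
    letI instKL : L.Structure K := (L.lhomWithConstants M).reduct K
    letI instK0 : L₀.Structure K := ι.reduct K
    letI instK0M : L₀[[M]].Structure K := ι'.reduct K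
    haveI hexp0 : (lhomWithConstants L₀ M).IsExpansionOn K :=
      ⟨fun _ _ => rfl, fun _ _ => rfl⟩
    haveI hexpK : ι'.IsExpansionOn K := LHom.isExpansionOn_reduct ι' K
    haveI hKD : K ⊨ D := (LHom.onTheory_model (M := (K : Type (max u v))) ι' D).1
      (K.is_model.mono Set.subset_union_left)
    have hK : Nonempty (M ↪ₑ[L₀] K) := ⟨ElementaryEmbedding.ofModelsElementaryDiagram L₀ M K⟩
    haveI hexpKL : (L.lhomWithConstants M).IsExpansionOn K :=
      LHom.isExpansionOn_reduct (L.lhomWithConstants M) K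
    refine ⟨K, instK0, instKL, hK, inferInstance, ?_⟩
    have hKf : (K : Type (max u v)) ⊨ φ' :=
      Theory.realize_sentence_of_mem (T := ι'.onTheory D ∪ {φ'}) (Set.mem_union_right _ rfl)
    exact (LHom.realize_onSentence (M := (K : Type (max u v))) (L.lhomWithConstants M) φ).1 hKf
end

section
/- Characterization in terms of consistency: Γ is friendly to φ if and only if φ is consistent with every set Δ of sentences in the language L_Γ that is consistent with Γ. -/
open FirstOrder Language

universe u v

/-- Characterization in terms of consistency: `Γ` is friendly to `φ` iff `φ` is consistent
with every set `Δ` of sentences of the language `L_Γ` that is consistent with `Γ`. -/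
theorem friendly_iff_consistency {L₀ L : FirstOrder.Language.{u, v}} (ι : L₀ →ᴸ L)
    (hι : ι.Injective) (Γ : L₀.Theory) (φ : L.Sentence) :
    Friendly ι Γ φ ↔
      ∀ Δ : L₀.Theory, (Γ ∪ Δ).IsSatisfiable → (ι.onTheory Δ ∪ {φ}).IsSatisfiable := by
  classical
  constructor
  · -- forward direction
    intro h Δ hΔ
    obtain ⟨M⟩ := hΔ
    haveI hMΓΔ : M ⊨ Γ ∪ Δ := M.is_model
    haveI hMΓ : M ⊨ Γ := hMΓΔ.mono Set.subset_union_left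
    haveI hMΔ : M ⊨ Δ := hMΓΔ.mono Set.subset_union_right
    obtain ⟨N, S₀, SL, ⟨f⟩, hexp, hφ⟩ := h M hMΓ
    haveI : Nonempty N := ⟨f (Classical.arbitrary M)⟩
    haveI : @Theory.Model L₀ N S₀ Δ := (f.theory_model_iff Δ).1 hMΔ
    haveI := hexp
    haveI : @Theory.Model L N SL (ι.onTheory Δ) :=
      (@LHom.onTheory_model L₀ L N _ SL ι hexp Δ).2 ‹_›
    haveI : @Theory.Model L N SL (ι.onTheory Δ ∪ {φ}) :=
      Theory.model_union_iff.2 ⟨‹_›, Theory.model_singleton_iff.2 hφ⟩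
    exact Theory.Model.isSatisfiable N
  · -- backward direction
    intro h M _ _ hMΓ
    haveI hMΓ' : M ⊨ Γ := hMΓ
    -- step 1: a model of `ι.onTheory (Th M) ∪ {φ}`
    have hsat1 : (Γ ∪ L₀.completeTheory M).IsSatisfiable := by
      haveI : M ⊨ Γ ∪ L₀.completeTheory M :=
        Theory.model_union_iff.2 ⟨hMΓ, inferInstance⟩
      exact Theory.Model.isSatisfiable M
    obtain ⟨NN⟩ := h (L₀.completeTheory M) hsat1
    letI SN0 : L₀.Structure NN := ι.reduct NN
    have h1 : NN ⊨ ι.onTheory (L₀.completeTheory M) :=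
      Theory.Model.mono (T' := ι.onTheory (L₀.completeTheory M) ∪ {φ}) NN.is_model
        Set.subset_union_left
    haveI hNNTh : NN ⊨ L₀.completeTheory M :=
      (ι.onTheory_model (L₀.completeTheory M)).1 h1
    have hNNφ : (NN : Type _) ⊨ φ :=
      Theory.realize_sentence_of_mem (ι.onTheory (L₀.completeTheory M) ∪ {φ})
        (Set.mem_union_right _ rfl)
    -- the big theory with constants for `M`
    set g : L₀[[M]] →ᴸ L[[M]] := ι.sumMap (LHom.id (constantsOn M)) with hg
    set φ' : L[[M]].Sentence := (L.lhomWithConstants M).onSentence φ with hφ'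
    -- key: finite pieces of the elementary diagram together with `φ'` are satisfiable
    have key : ∀ S : Finset (L₀[[M]].Sentence), ↑S ⊆ L₀.elementaryDiagram M →
        (g.onTheory ↑S ∪ {φ'}).IsSatisfiable := by
      intro S hS
      set χ : L₀.Formula M :=
        BoundedFormula.iInf (fun ψ : S => Formula.equivSentence.symm ψ.1) with hχ
      have hχM : χ.Realize (fun a => (L₀.con a : M)) := by
        rw [hχ]
        refine (BoundedFormula.realize_iInf).2 fun ⟨ψ, hψ⟩ => ?_
        exact (Formula.realize_equivSentence_symm_con M ψ).2
          (mem_completeTheory.1 (hS hψ))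
      set s : Set M := ↑χ.freeVarFinset with hs
      haveI : Finite s := χ.freeVarFinset.finite_toSet.to_subtype
      set χ' : L₀.Formula s :=
        χ.restrictFreeVar (Set.inclusion (Set.Subset.refl s)) with hχ'
      set σ : L₀.Sentence := Formula.iExs s (χ'.relabel (Sum.inr : s → Empty ⊕ s)) with hσ
      have hσM : M ⊨ σ := by
        refine Formula.realize_iExs.2 ⟨fun a => (L₀.con a.1 : M), Formula.realize_relabel.2 ?_⟩
        exact (BoundedFormula.realize_restrictFreeVar' (Set.Subset.refl s)).2 hχM
      have hσN : (NN : Type _) ⊨ σ :=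
        (realize_iff_of_model_completeTheory M NN σ).2 hσM
      obtain ⟨w, hw⟩ := Formula.realize_iExs.1 hσN
      set v : M → NN := fun m =>
        if hm : m ∈ χ.freeVarFinset then w ⟨m, hm⟩ else Classical.arbitrary NN with hv
      have hχN : χ.Realize v := by
        have hfun : (v ∘ (Subtype.val : s → M)) =
            fun a => Sum.elim (default : Empty → NN) w (Sum.inr a) := by
          funext a
          exact dif_pos a.2
        have hw2 : Formula.Realize χ' (v ∘ (Subtype.val : s → M)) := by
          rw [hfun]; exact Formula.realize_relabel.1 hw
        exact (BoundedFormula.realize_restrictFreeVar' (Set.Subset.refl s)).1 hw2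
      letI cS : (constantsOn M).Structure NN := constantsOn.structure v
      have hSreal : ∀ ψ ∈ S, @Sentence.Realize (L₀[[M]]) NN _ ψ := by
        intro ψ hψ
        refine (Formula.realize_equivSentence_symm (M := NN) ψ v).1 ?_
        rw [hχ] at hχN
        exact (BoundedFormula.realize_iInf).1 hχN ⟨ψ, hψ⟩
      haveI hgexp : g.IsExpansionOn NN := by
        rw [hg]; exact LHom.sumMap_isExpansionOn _ _ _
      haveI : NN ⊨ g.onTheory ↑S ∪ {φ'} := by
        refine Theory.model_union_iff.2 ⟨?_, ?_⟩
        · exact (g.onTheory_model _).2 ((Theory.model_iff _).2 hSreal)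
        · exact Theory.model_singleton_iff.2
            ((LHom.realize_onSentence (M := NN) (L.lhomWithConstants M) φ).2 hNNφ)
      exact Theory.Model.isSatisfiable NN
    -- compactness: the full theory is satisfiable
    have hsatT : (g.onTheory (L₀.elementaryDiagram M) ∪ {φ'}).IsSatisfiable := by
      rw [Theory.isSatisfiable_iff_isFinitelySatisfiable]
      intro T0 hT0
      have hsub : ↑(T0.erase φ') ⊆ g.onSentence '' (L₀.elementaryDiagram M) := by
        intro x hx
        rcases hT0 (Finset.mem_of_mem_erase hx) with hx' | hx'
        · exact hx'
        · exact absurd hx' (Finset.ne_of_mem_erase hx)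
      obtain ⟨S, hSsub, hSim⟩ := Finset.subset_set_image_iff.1 hsub
      refine (key S hSsub).mono ?_
      intro x hx
      by_cases hxφ : x = φ'
      · exact Set.mem_union_right _ (hxφ ▸ rfl)
      · refine Set.mem_union_left _ ?_
        have : x ∈ S.image (g.onSentence) := hSim ▸ Finset.mem_erase.2 ⟨hxφ, hx⟩
        obtain ⟨ψ, hψ, rfl⟩ := Finset.mem_image.1 this
        exact Set.mem_image_of_mem _ hψ
    -- extract the model and build the required structures
    obtain ⟨P⟩ := hsatT
    letI SP_L : L.Structure P := (L.lhomWithConstants M).reduct P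
    letI SP_LM0 : L₀[[M]].Structure P := g.reduct P
    letI SP_L0 : L₀.Structure P := ι.reduct P
    haveI hPexp : (lhomWithConstants L₀ M).IsExpansionOn P :=
      ⟨fun _ _ => rfl, fun _ _ => rfl⟩
    haveI hgexpP : g.IsExpansionOn P := g.isExpansionOn_reduct P
    have hPdiag1 : P ⊨ g.onTheory (L₀.elementaryDiagram M) :=
      Theory.Model.mono (T' := g.onTheory (L₀.elementaryDiagram M) ∪ {φ'}) P.is_model
        Set.subset_union_left
    haveI hPdiag : P ⊨ L₀.elementaryDiagram M :=
      (g.onTheory_model (L₀.elementaryDiagram M)).1 hPdiag1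
    haveI hPexp2 : (L.lhomWithConstants M).IsExpansionOn P :=
      (L.lhomWithConstants M).isExpansionOn_reduct P
    have hPφ : @Sentence.Realize L P SP_L φ :=
      (LHom.realize_onSentence (M := P) (L.lhomWithConstants M) φ).1
        (Theory.realize_sentence_of_mem (g.onTheory (L₀.elementaryDiagram M) ∪ {φ'})
          (Set.mem_union_right _ rfl))
    refine ⟨P, SP_L0, SP_L, ⟨ElementaryEmbedding.ofModelsElementaryDiagram L₀ M P⟩, ?_, hPφ⟩
    exact ι.isExpansionOn_reduct P
end

section
/- Refinement of the consistency characterization: Γ is friendly to φ if and only if Γ ⊢ ψ for every sentence ψ in the language L_Γ with φ ⊢ ψ. -/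
open FirstOrder Language

universe u v

/-! Only the backward direction has content. Given `M ⊨ Γ`, the elementary diagram of `M`
together with `φ` is finitely satisfiable: a finite part of the diagram is captured by a single
`L₀`-sentence `ψ` true in `M`, obtained by existentially quantifying away its constants, and if
`φ ⊢ ¬ψ` then `Γ ⊢ ¬ψ` would refute `M ⊨ ψ`. By compactness this theory has a model, which is an
elementary extension of `M` expanded to a model of `φ`. -/

namespace FirstOrder.Language

theorem Sentence.realize_exClosure_equivSentence_symm_iff {L : Language} {α : Type*}
    [DecidableEq α] {A : Type*} [L.Structure A] [Nonempty A] (θ : L[[α]].Sentence) :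
    A ⊨ (Formula.equivSentence.symm θ).exClosure ↔
      ∃ v : α → A, letI := constantsOn.structure v; A ⊨ θ := by
  simpa using (Formula.exists_realize_equivSentence_iff_realize_exClosure
    (φ := Formula.equivSentence.symm θ)).symm

variable {L₀ L : FirstOrder.Language.{u, v}} (ι : L₀ →ᴸ L) {T : L.Theory}
  {M : Type (max u v)} [L₀.Structure M] [Nonempty M]

theorem isSatisfiable_addConstants_finset_union_of_subset_elementaryDiagram
    (h : ∀ ψ : L₀.Sentence, T ⊨ᵇ ι.onSentence ψ → M ⊨ ψ)
    {D : Finset L₀[[M]].Sentence} (hD : ↑D ⊆ L₀.elementaryDiagram M) :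
    ((ι.addConstants M).onTheory ↑D ∪ (L.lhomWithConstants M).onTheory T).IsSatisfiable := by
  classical
  set θ : L₀[[M]].Sentence := BoundedFormula.iInf fun d : D => d.1
  set ψ : L₀.Sentence := (Formula.equivSentence.symm θ).exClosure
  have hMψ : M ⊨ ψ :=
    (Sentence.realize_exClosure_equivSentence_symm_iff θ).2
      ⟨id, BoundedFormula.realize_iInf.2 fun d => hD d.2⟩
  -- `M ⊨ ψ` forbids `T ⊨ ¬ψ`, so some model of `T` satisfies `ψ`.
  obtain ⟨A, hAψ⟩ : ∃ A : Theory.ModelType.{u, v, max u v} T, ¬ A ⊨ ι.onSentence ψ.not := by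
    by_contra! hT
    exact h ψ.not (Theory.models_sentence_iff.2 hT) hMψ
  let : L₀.Structure A := ι.reduct A
  obtain ⟨c, hAθ⟩ := (Sentence.realize_exClosure_equivSentence_symm_iff (A := A) θ).1
    (not_not.1 ((LHom.realize_onSentence A ι ψ.not).not.1 hAψ))
  let := constantsOn.structure c
  have hAD : A ⊨ (D : L₀[[M]].Theory) :=
    ⟨fun d hd => BoundedFormula.realize_iInf.1 hAθ ⟨d, hd⟩⟩
  have : A ⊨ (ι.addConstants M).onTheory ↑D ∪ (L.lhomWithConstants M).onTheory T :=
    ((LHom.onTheory_model _ _).2 hAD).union ((LHom.onTheory_model _ _).2 A.is_model)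
  exact Theory.Model.isSatisfiable A

theorem isSatisfiable_addConstants_elementaryDiagram_union
    (h : ∀ ψ : L₀.Sentence, T ⊨ᵇ ι.onSentence ψ → M ⊨ ψ) :
    ((ι.addConstants M).onTheory (L₀.elementaryDiagram M) ∪
      (L.lhomWithConstants M).onTheory T).IsSatisfiable := by
  classical
  rw [Theory.isSatisfiable_iff_isFinitelySatisfiable]
  intro T₀ hT₀
  obtain ⟨T₁, T₂, rfl, hT₁, hT₂⟩ := Finset.subset_union_elim hT₀
  obtain ⟨D, hD, rfl⟩ := Finset.subset_set_image_iff.1 hT₁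
  refine (isSatisfiable_addConstants_finset_union_of_subset_elementaryDiagram ι h hD).mono ?_
  rw [Finset.coe_union, Finset.coe_image]
  exact Set.union_subset_union subset_rfl (hT₂.trans Set.sdiff_subset)

theorem exists_elementaryEmbedding_isExpansionOn_model
    (h : ∀ ψ : L₀.Sentence, T ⊨ᵇ ι.onSentence ψ → M ⊨ ψ) :
    ∃ (N : Type (max u v)) (S₀ : L₀.Structure N) (SL : L.Structure N),
      Nonempty (@ElementaryEmbedding L₀ M N _ S₀) ∧ @LHom.IsExpansionOn L₀ L ι N S₀ SL ∧
        @Theory.Model L N SL T := by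
  obtain ⟨N⟩ := isSatisfiable_addConstants_elementaryDiagram_union ι h
  let : L₀[[M]].Structure N := (ι.addConstants M).reduct N
  let S₀ : L₀.Structure N := (L₀.lhomWithConstants M).reduct N
  let SL : L.Structure N := (L.lhomWithConstants M).reduct N
  have : N ⊨ L₀.elementaryDiagram M :=
    (LHom.onTheory_model _ _).1 (N.is_model.mono Set.subset_union_left)
  refine ⟨N, S₀, SL, ⟨ElementaryEmbedding.ofModelsElementaryDiagram L₀ M N⟩,
    ⟨fun _ _ => rfl, fun _ _ => rfl⟩, ?_⟩
  exact (LHom.onTheory_model _ _).1 (N.is_model.mono Set.subset_union_right)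

end FirstOrder.Language

theorem Friendly.models_of_models_onSentence {L₀ L : FirstOrder.Language.{u, v}} {ι : L₀ →ᴸ L}
    {Γ : L₀.Theory} {φ : L.Sentence} (hF : Friendly ι Γ φ) {ψ : L₀.Sentence}
    (hψ : ({φ} : L.Theory) ⊨ᵇ ι.onSentence ψ) : Γ ⊨ᵇ ψ := by
  refine Theory.models_sentence_iff.2 fun M => ?_
  obtain ⟨N, S₀, SL, ⟨e⟩, hexp, hφ⟩ := hF M M.is_model
  have : Nonempty N := Nonempty.map e inferInstance
  have : N ⊨ ({φ} : L.Theory) := Theory.model_singleton_iff.2 hφ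
  exact (e.map_sentence ψ).2 ((LHom.realize_onSentence N ι ψ).1 (hψ.realize_sentence N))

theorem friendly_iff_refinement_general {L₀ L : FirstOrder.Language.{u, v}} (ι : L₀ →ᴸ L)
    (Γ : L₀.Theory) (φ : L.Sentence) :
    Friendly ι Γ φ ↔
      ∀ ψ : L₀.Sentence, (({φ} : L.Theory) ⊨ᵇ ι.onSentence ψ) → Γ ⊨ᵇ ψ := by
  refine ⟨fun hF ψ => hF.models_of_models_onSentence, fun h M _ _ hM => ?_⟩
  obtain ⟨N, S₀, SL, e, hexp, hN⟩ := exists_elementaryEmbedding_isExpansionOn_model ι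
    (T := {φ}) (M := M) fun ψ hψ => (h ψ hψ).realize_sentence M
  exact ⟨N, S₀, SL, e, hexp, Theory.model_singleton_iff.1 hN⟩

/-- Refinement: `Γ` is friendly to `φ` iff `Γ ⊢ ψ` for every sentence `ψ` of the
language `L_Γ` such that `φ ⊢ ψ`. -/
theorem friendly_iff_refinement {L₀ L : FirstOrder.Language.{u, v}} (ι : L₀ →ᴸ L)
    (hι : ι.Injective) (Γ : L₀.Theory) (φ : L.Sentence) :
    Friendly ι Γ φ ↔
      ∀ ψ : L₀.Sentence, (({φ} : L.Theory) ⊨ᵇ ι.onSentence ψ) → Γ ⊨ᵇ ψ :=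
  friendly_iff_refinement_general ι Γ φ
end

section
/- Singleton cumulative transitivity: if Γ is friendly to φ and Γ ∪ {φ} is friendly to ψ, then Γ is friendly to ψ. -/
open FirstOrder Language

universe u v

lemma comp_isExpansionOn' {L₀ L₁ L₂ : Language} (ι : L₀ →ᴸ L₁) (ι' : L₁ →ᴸ L₂)
    (M : Type*) [L₀.Structure M] [L₁.Structure M] [L₂.Structure M]
    [ι.IsExpansionOn M] [ι'.IsExpansionOn M] : (ι'.comp ι).IsExpansionOn M :=
  ⟨fun f x => by rw [LHom.comp_onFunction]; simp,
   fun R x => by rw [LHom.comp_onRelation]; simp⟩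

/-- An `L₁`-elementary embedding between expansions is `L₀`-elementary. -/
noncomputable def reductElementary {L₀ L₁ : Language} (ι : L₀ →ᴸ L₁)
    {M N : Type*} [L₀.Structure M] [L₁.Structure M] [L₀.Structure N]
    [L₁.Structure N] [ι.IsExpansionOn M] [ι.IsExpansionOn N]
    (f : M ↪ₑ[L₁] N) : M ↪ₑ[L₀] N :=
  ⟨f, fun _ φ x => by
    rw [← LHom.realize_onFormula ι (M := M) φ, ← LHom.realize_onFormula ι (M := N) φ]
    exact f.map_formula' _ x⟩

/-- Singleton cumulative transitivity: if `Γ` is friendly to `φ` and `Γ ∪ {φ}` is friendly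
to `ψ`, then `Γ` is friendly to `ψ`. -/
theorem singleton_cumulative_transitivity {L₀ L₁ L₂ : FirstOrder.Language.{u, v}}
    (ι : L₀ →ᴸ L₁) (ι' : L₁ →ᴸ L₂) (hι : ι.Injective) (hι' : ι'.Injective)
    (Γ : L₀.Theory) (φ : L₁.Sentence) (ψ : L₂.Sentence)
    (h₁ : Friendly ι Γ φ) (h₂ : Friendly ι' (ι.onTheory Γ ∪ {φ}) ψ) :
    Friendly (ι'.comp ι) Γ ψ := by
  intro M _ _ hM
  obtain ⟨N, S₀, S₁, ⟨g⟩, hexp, hφ⟩ := h₁ M hM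
  haveI := hexp
  haveI : Nonempty N := Nonempty.map g inferInstance
  have hNΓ : N ⊨ Γ := (g.theory_model_iff Γ).mp hM
  have hN : N ⊨ ι.onTheory Γ ∪ {φ} := by
    rw [Theory.model_union_iff]
    exact ⟨(ι.onTheory_model Γ).mpr hNΓ, Theory.model_singleton_iff.mpr hφ⟩
  obtain ⟨P, T₁, T₂, ⟨g'⟩, hexp', hψ⟩ := h₂ N hN
  haveI := hexp'
  letI T₀ : L₀.Structure P := ι.reduct P
  haveI : ι.IsExpansionOn P := LHom.isExpansionOn_reduct ι P
  exact ⟨P, T₀, T₂, ⟨((reductElementary ι g').comp g)⟩,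
    comp_isExpansionOn' ι ι' P, hψ⟩
end

section
/- Local left strengthening: if L_Δ ⊆ L_Γ, Δ ⊢ γ for every γ ∈ Γ, and Γ is friendly to φ, then Δ is friendly to φ. -/
open FirstOrder Language

universe u v

/-- Local left strengthening: if `L_Δ ⊆ L_Γ`, `Δ ⊢ Γ`, and `Γ` is friendly to `φ`,
then `Δ` is friendly to `φ`. -/
theorem local_left_strengthening {LΔ L₀ L : FirstOrder.Language.{u, v}}
    (κ : LΔ →ᴸ L₀) (ι : L₀ →ᴸ L) (hκ : κ.Injective) (hι : ι.Injective)
    (Δ : LΔ.Theory) (Γ : L₀.Theory) (φ : L.Sentence)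
    (hΔΓ : ∀ γ ∈ Γ, κ.onTheory Δ ⊨ᵇ γ) (h : Friendly ι Γ φ) :
    Friendly (ι.comp κ) Δ φ := by
  classical
  intro M _ _ hM
  letI : Inhabited M := Classical.inhabited_of_nonempty ‹Nonempty M›
  letI S₀M : L₀.Structure M := κ.defaultExpansion M
  haveI : @LHom.IsExpansionOn LΔ L₀ κ M _ S₀M := hκ.isExpansionOn_default M
  have hMΔ : M ⊨ κ.onTheory Δ := (LHom.onTheory_model κ Δ).2 hM
  haveI : M ⊨ κ.onTheory Δ := hMΔ
  have hMΓ : M ⊨ Γ := ⟨fun γ hγ => (hΔΓ γ hγ).realize_sentence M⟩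
  obtain ⟨N, S₀, SL, ⟨f⟩, hexp, hφ⟩ := h M hMΓ
  letI SΔN : LΔ.Structure N := @LHom.reduct LΔ L₀ κ N S₀
  haveI : @LHom.IsExpansionOn LΔ L₀ κ N SΔN S₀ :=
    @LHom.isExpansionOn_reduct LΔ L₀ κ N S₀
  refine ⟨N, SΔN, SL, ⟨⟨f.toEmbedding, ?_⟩⟩, ?_, hφ⟩
  · intro n ψ x
    have := f.map_formula (κ.onFormula ψ) x
    rwa [LHom.realize_onFormula, LHom.realize_onFormula] at this
  · constructor
    · intro n f x
      have h1 := @LHom.map_onFunction LΔ L₀ κ N SΔN S₀ _ n f x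
      have h2 := @LHom.map_onFunction L₀ L ι N S₀ SL hexp n (κ.onFunction f) x
      simpa [LHom.comp] using h2.trans h1
    · intro n R x
      have h1 := @LHom.map_onRelation LΔ L₀ κ N SΔN S₀ _ n R x
      have h2 := @LHom.map_onRelation L₀ L ι N S₀ SL hexp n (κ.onRelation R) x
      simpa [LHom.comp] using h2.trans h1
end

section
/- Local monotony: if L_Δ ⊆ L_Γ, Γ ⊆ Δ, and Γ is friendly to φ, then Δ is friendly to φ. (Note the language condition forces L_Δ = L_Γ.) -/
open FirstOrder Language

universe u v

/-- Local monotony: if `L_Δ ⊆ L_Γ` and `Γ ⊆ Δ` (so that `Δ` and `Γ` have the same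
language) and `Γ` is friendly to `φ`, then `Δ` is friendly to `φ`. -/
theorem local_monotony {L₀ L : FirstOrder.Language.{u, v}} (ι : L₀ →ᴸ L)
    (hι : ι.Injective) (Γ Δ : L₀.Theory) (φ : L.Sentence)
    (hsub : Γ ⊆ Δ) (h : Friendly ι Γ φ) :
    Friendly ι Δ φ := by
  intro M _ _ hM
  exact h M (hM.mono hsub)
end

section
/- Proof by exhaustion: if Γ ∪ {φ} is friendly to χ and Γ ∪ {¬φ} is friendly to χ, then Γ is friendly to χ. -/
open FirstOrder Language

universe u v

/-- Proof by exhaustion: if `Γ ∪ {φ}` is friendly to `χ` and `Γ ∪ {¬φ}` is friendly to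
`χ`, then `Γ` is friendly to `χ`. -/
theorem proof_by_exhaustion {L₀ L₁ L₂ : FirstOrder.Language.{u, v}}
    (ι : L₀ →ᴸ L₁) (ι' : L₁ →ᴸ L₂) (hι : ι.Injective) (hι' : ι'.Injective)
    (Γ : L₀.Theory) (φ : L₁.Sentence) (χ : L₂.Sentence)
    (h₁ : Friendly ι' (ι.onTheory Γ ∪ {φ}) χ)
    (h₂ : Friendly ι' (ι.onTheory Γ ∪ {φ.not}) χ) :
    Friendly (ι'.comp ι) Γ χ := by
  intro M _ _ hM
  classical
  haveI : Inhabited M := Classical.inhabited_of_nonempty ‹_›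
  -- expand M to an L₁-structure
  letI SM₁ : L₁.Structure M := ι.defaultExpansion M
  haveI hexp : ι.IsExpansionOn M := hι.isExpansionOn_default M
  have hM₁ : M ⊨ ι.onTheory Γ := (ι.onTheory_model Γ).mpr hM
  -- helper to process either case
  have key : ∀ (T : L₁.Theory), M ⊨ T → T ⊇ ι.onTheory Γ →
      Friendly ι' T χ →
      ∃ (N : Type (max u v)) (S₀ : L₀.Structure N) (SL : L₂.Structure N),
        Nonempty (@ElementaryEmbedding L₀ M N _ S₀) ∧
        (@LHom.IsExpansionOn L₀ L₂ (ι'.comp ι) N S₀ SL) ∧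
        (@Sentence.Realize L₂ N SL χ) := by
    intro T hMT _ hF
    obtain ⟨N, S₁, SL, ⟨f⟩, hNe, hNχ⟩ := hF M hMT
    letI := S₁
    letI := SL
    letI S₀ : L₀.Structure N := ι.reduct N
    haveI hre : @LHom.IsExpansionOn L₀ L₁ ι N S₀ S₁ := LHom.isExpansionOn_reduct ι N
    refine ⟨N, S₀, SL, ⟨⟨f.toEmbedding, fun {n} ψ x => ?_⟩⟩, ⟨?_, ?_⟩, hNχ⟩
    · have h1 := f.map_formula (ι.onFormula ψ) x
      rw [ι.realize_onFormula, ι.realize_onFormula] at h1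
      exact h1
    · intro n g x
      have := hNe.map_onFunction (ι.onFunction g) x
      have h2 := hre.map_onFunction g x
      exact this.trans h2
    · intro n r x
      have := hNe.map_onRelation (ι.onRelation r) x
      have h2 := hre.map_onRelation r x
      exact this.trans h2
  by_cases hφ : M ⊨ φ
  · refine key _ ?_ Set.subset_union_left h₁
    rw [Theory.model_union_iff]
    exact ⟨hM₁, by simpa using hφ⟩
  · refine key _ ?_ Set.subset_union_left h₂
    rw [Theory.model_union_iff]
    exact ⟨hM₁, by simpa using hφ⟩
end

section
/- Local disjunction in the premisses: if every symbol of ψ occurs in Γ ∪ {φ} and every symbol of φ occurs in Γ ∪ {ψ}, and Γ ∪ {φ} is friendly to χ and Γ ∪ {ψ} is friendly to χ, then Γ ∪ {φ ∨ ψ} is friendly to χ. -/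
open FirstOrder Language

universe u v

theorem FirstOrder.Language.Theory.model_union_sup_iff {L : FirstOrder.Language} {M : Type*}
    [L.Structure M] (T : L.Theory) (φ ψ : L.Sentence) :
    M ⊨ T ∪ {φ ⊔ ψ} ↔ M ⊨ T ∪ {φ} ∨ M ⊨ T ∪ {ψ} := by
  simp only [Theory.model_union_iff, Theory.model_singleton_iff, Sentence.realize_sup,
    and_or_left]

theorem Friendly.of_model_or {L₀ L : FirstOrder.Language.{u, v}} {ι : L₀ →ᴸ L} {T T₁ T₂ : L₀.Theory}
    {χ : L.Sentence} (h₁ : Friendly ι T₁ χ) (h₂ : Friendly ι T₂ χ)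
    (hT : ∀ (M : Type (max u v)) [L₀.Structure M], M ⊨ T → M ⊨ T₁ ∨ M ⊨ T₂) :
    Friendly ι T χ := by
  intro M _ _ hM
  rcases hT M hM with hM₁ | hM₂
  · exact h₁ M hM₁
  · exact h₂ M hM₂

theorem local_disjunction_in_premisses_general {L₀ L₁ L₂ : FirstOrder.Language.{u, v}}
    (ι : L₀ →ᴸ L₁) (ι' : L₁ →ᴸ L₂)
    (Γ : L₀.Theory) (φ ψ : L₁.Sentence) (χ : L₂.Sentence)
    (h₁ : Friendly ι' (ι.onTheory Γ ∪ {φ}) χ)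
    (h₂ : Friendly ι' (ι.onTheory Γ ∪ {ψ}) χ) :
    Friendly ι' (ι.onTheory Γ ∪ {φ ⊔ ψ}) χ :=
  h₁.of_model_or h₂ fun _ _ hM => (Theory.model_union_sup_iff _ φ ψ).1 hM

/-- Local disjunction in the premisses: if every symbol of `ψ` occurs in `Γ ∪ {φ}` and
every symbol of `φ` occurs in `Γ ∪ {ψ}` (so `φ` and `ψ` are sentences of the same
language `L₁ = L_{Γ,φ} = L_{Γ,ψ}`), and `Γ ∪ {φ}` and `Γ ∪ {ψ}` are both friendly to
`χ`, then `Γ ∪ {φ ∨ ψ}` is friendly to `χ`. -/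
theorem local_disjunction_in_premisses {L₀ L₁ L₂ : FirstOrder.Language.{u, v}}
    (ι : L₀ →ᴸ L₁) (ι' : L₁ →ᴸ L₂) (hι : ι.Injective) (hι' : ι'.Injective)
    (Γ : L₀.Theory) (φ ψ : L₁.Sentence) (χ : L₂.Sentence)
    (h₁ : Friendly ι' (ι.onTheory Γ ∪ {φ}) χ)
    (h₂ : Friendly ι' (ι.onTheory Γ ∪ {ψ}) χ) :
    Friendly ι' (ι.onTheory Γ ∪ {φ ⊔ ψ}) χ :=
  local_disjunction_in_premisses_general ι ι' Γ φ ψ χ h₁ h₂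
end

section
/- For a sentence φ in first-order logic with equality: ∅ is friendly to φ if and only if φ has a model of every finite cardinality. -/
open FirstOrder Language

universe u v

open Cardinal in
/-- If `φ` has models of every positive finite cardinality, it has an infinite model. -/
lemma exists_infinite_model_of_all_finite_models (L : FirstOrder.Language.{0, 0})
    (φ : L.Sentence)
    (h : ∀ n : ℕ, 0 < n →
        ∃ (M : Type) (S : L.Structure M) (_ : Fintype M),
          Fintype.card M = n ∧ @Sentence.Realize L M S φ) :
    ∃ (K : Type) (SK : L.Structure K), Infinite K ∧ @Sentence.Realize L K SK φ := by
  classical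
  set T : ℕ → L.Theory := fun n => insert φ ((fun i : ℕ => Sentence.cardGe L i) '' {i | i ≤ n})
    with hT
  have hmono : Monotone T := by
    intro a b hab
    apply Set.insert_subset_insert
    apply Set.image_mono
    intro i hi
    exact le_trans hi hab
  have hsat : Theory.IsSatisfiable (⋃ n, T n) := by
    rw [Theory.isSatisfiable_directed_union_iff (hmono.directed_le)]
    intro n
    obtain ⟨M, S, fM, hc, hφ⟩ := h (n + 1) (Nat.succ_pos n)
    letI := fM
    haveI : Nonempty M := by
      rw [← Fintype.card_pos_iff, hc]; exact Nat.succ_pos n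
    have : M ⊨ T n := by
      constructor
      intro ψ hψ
      rcases hψ with rfl | ⟨i, hi, rfl⟩
      · exact hφ
      · rw [Sentence.realize_cardGe]
        have : #M = (n + 1 : ℕ) := by simp [Cardinal.mk_fintype, hc]
        rw [this]
        exact_mod_cast Nat.le_succ_of_le hi
    exact ⟨Theory.ModelType.of _ M⟩
  obtain ⟨K⟩ := hsat
  have hK : ∀ n : ℕ, (n : Cardinal) ≤ #K := by
    intro n
    have : K ⊨ Sentence.cardGe L n := by
      apply (K.is_model).realize_of_mem (Sentence.cardGe L n)
      exact Set.mem_iUnion.2 ⟨n, Set.mem_insert_iff.2 (Or.inr ⟨n, le_refl n, rfl⟩)⟩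
    exact (Sentence.realize_cardGe _ n).1 this
  have hinf : Infinite K := by
    rw [Cardinal.infinite_iff, Cardinal.aleph0_le]
    exact hK
  have hφK : K ⊨ φ := by
    apply (K.is_model).realize_of_mem φ
    exact Set.mem_iUnion.2 ⟨0, Set.mem_insert _ _⟩
  exact ⟨K, inferInstance, hinf, hφK⟩

open Cardinal in
/-- The empty set of premisses is friendly to `φ` iff `φ` has a model of every finite
cardinality. -/
theorem empty_friendly_iff_all_finite_models (L : FirstOrder.Language.{0, 0})
    (φ : L.Sentence) :
    Friendly (LHom.ofIsEmpty Language.empty L) (∅ : Language.empty.Theory) φ ↔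
      ∀ n : ℕ, 0 < n →
        ∃ (M : Type) (S : L.Structure M) (_ : Fintype M),
          Fintype.card M = n ∧ @Sentence.Realize L M S φ := by
  constructor
  · -- Friendly → all finite models
    intro hf n hn
    haveI : Language.empty.Structure (Fin n) := Language.emptyStructure
    haveI : Nonempty (Fin n) := Fin.pos_iff_nonempty.mp hn
    obtain ⟨N, S₀, SL, ⟨e⟩, _, hφ⟩ := hf (Fin n) inferInstance
    -- compute cardinality of N
    have h1 : (n : Cardinal) ≤ #N := by
      have : (Fin n) ⊨ Sentence.cardGe Language.empty n := by
        rw [Sentence.realize_cardGe, Cardinal.mk_fin]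
      exact (Sentence.realize_cardGe _ n).1 ((e.map_sentence _).1 this)
    have h2 : #N ≤ (n : Cardinal) := by
      by_contra hlt
      push_neg at hlt
      have : ((n + 1 : ℕ) : Cardinal) ≤ #N := by
        rw [Cardinal.nat_succ]
        exact Order.succ_le_of_lt hlt
      have hN : N ⊨ Sentence.cardGe Language.empty (n + 1) :=
        (Sentence.realize_cardGe _ _).2 this
      have hM : (Fin n) ⊨ Sentence.cardGe Language.empty (n + 1) :=
        (e.map_sentence _).2 hN
      rw [Sentence.realize_cardGe, Cardinal.mk_fin] at hM
      exact absurd (Nat.cast_le.mp hM) (by omega)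
    have hcard : #N = #(Fin n) := by rw [Cardinal.mk_fin]; exact le_antisymm h2 h1
    obtain ⟨g⟩ := Cardinal.eq.mp hcard
    haveI fN : Fintype N := Fintype.ofEquiv (Fin n) g.symm
    refine ⟨N, SL, fN, ?_, hφ⟩
    rw [Fintype.card_congr g, Fintype.card_fin]
  · -- all finite models → Friendly
    intro h M _ _ _
    cases finite_or_infinite M with
    | inl hfin =>
      haveI := Fintype.ofFinite M
      obtain ⟨K, SK, fK, hcard, hφ⟩ := h (Fintype.card M) Fintype.card_pos
      letI := fK
      letI : L.Structure K := SK
      have e : K ≃ M := Fintype.equivOfCardEq hcard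
      letI SL : L.Structure M := e.inducedStructure
      refine ⟨M, ‹Language.empty.Structure M›, SL, ⟨ElementaryEmbedding.refl _ _⟩,
        inferInstance, ?_⟩
      exact (StrongHomClass.realize_sentence (Equiv.inducedStructureEquiv e) φ).1 hφ
    | inr hinf =>
      obtain ⟨K, SK, hKinf, hφK⟩ := exists_infinite_model_of_all_finite_models L φ h
      letI := SK
      haveI := hKinf
      haveI : K ⊨ ({φ} : L.Theory) := (Theory.model_singleton_iff).2 hφK
      obtain ⟨K', hK'⟩ :=
        Theory.exists_large_model_of_infinite_model ({φ} : L.Theory) (#M) K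
      haveI : Nonempty K' := inferInstance
      have hMK' : Cardinal.lift.{0} #M ≤ Cardinal.lift.{0} #(K' : Type) := by
        simpa using hK'
      obtain ⟨N, ⟨e⟩, hNcard⟩ :=
        exists_elementaryEmbedding_card_eq_of_ge Language.empty M #(K' : Type)
          (by simp [Language.card_empty]) hMK'
      have : #(N : Type) = #(K' : Type) := hNcard
      obtain ⟨g⟩ := Cardinal.eq.mp this
      letI SL : L.Structure N := (g.symm).inducedStructure
      have hφN : @Sentence.Realize L N SL φ :=
        (StrongHomClass.realize_sentence (Equiv.inducedStructureEquiv g.symm) φ).1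
          (K'.is_model.realize_of_mem φ (Set.mem_singleton φ))
      exact ⟨N, N.str, SL, ⟨e⟩, inferInstance, hφN⟩
end
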